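/- Let β ∈ ℂ with 0 < Re(β) < 1, and set φ_β(t) = ∫_{1}^{∞} β y^{-1-β} e^{-t y} dy for t > 0, where y^{-1-β} = exp((-1-β) log y). Then lim_{t → 0⁺} exp(-β · log t) · (1 - φ_β(t)) = Γ(1-β), where Γ is the complex Gamma function. -/

import Mathlib

/-! Integrating by parts, `φ_β(t) = e^{-t} - t ∫_1^∞ y^{-β} e^{-ty} dy`, and the substitution
`u = t y` turns the last integral into `t^{β-1} Γ(1-β, t)`, where
`Γ(s, x) = ∫_x^∞ e^{-u} u^{s-1} du` is the upper incomplete gamma function. Hence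
`t^{-β} (1 - φ_β(t)) = t^{-β} (1 - e^{-t}) + Γ(1-β, t)`: the first term is `O(t^{1 - Re β})`
and the second tends to `Γ(1-β)` as `t → 0⁺`. -/

open MeasureTheory Filter Set Topology
open scoped Complex

theorem tendsto_setIntegral_Ioi_nhdsGT {E : Type*} [NormedAddCommGroup E] [NormedSpace ℝ E]
    {μ : Measure ℝ} {f : ℝ → E} {a : ℝ} (hf : IntegrableOn f (Ioi a) μ) :
    Tendsto (fun t => ∫ x in Ioi t, f x ∂μ) (𝓝[>] a) (𝓝 (∫ x in Ioi a, f x ∂μ)) := by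
  refine ((aecover_Ioi_of_Ioi (μ := μ) (a := id)
    (tendsto_id.mono_left nhdsWithin_le_nhds)).integral_tendsto_of_countably_generated
    hf).congr' ?_
  filter_upwards [self_mem_nhdsWithin] with t (ht : a < t)
  rw [Measure.restrict_restrict measurableSet_Ioi, Ioi_inter_Ioi, id_eq, max_eq_left ht.le]

noncomputable def upperIncompleteGamma (s : ℂ) (x : ℝ) : ℂ :=
  ∫ u in Ioi x, ↑(-u).exp * (u : ℂ) ^ (s - 1)

theorem tendsto_upperIncompleteGamma_nhdsGT_zero {s : ℂ} (hs : 0 < s.re) :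
    Tendsto (upperIncompleteGamma s) (𝓝[>] 0) (𝓝 (Complex.Gamma s)) := by
  rw [Complex.Gamma_eq_integral hs]
  exact tendsto_setIntegral_Ioi_nhdsGT (Complex.GammaIntegral_convergent hs)

theorem integral_Ioi_one_cpow_mul_exp_neg_mul (s : ℂ) {t : ℝ} (ht : 0 < t) :
    ∫ y in Ioi (1 : ℝ), (y : ℂ) ^ (s - 1) * cexp (-((t * y : ℝ) : ℂ))
      = (t : ℂ) ^ (-s) * upperIncompleteGamma s t := by
  have htc : (t : ℂ) ≠ 0 := Complex.ofReal_ne_zero.2 ht.ne'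
  have hscale := integral_comp_mul_left_Ioi (fun u : ℝ => ↑(-u).exp * (u : ℂ) ^ (s - 1)) 1 ht
  rw [mul_one, Complex.real_smul, Complex.ofReal_inv] at hscale
  have hpoint : EqOn (fun y : ℝ => (y : ℂ) ^ (s - 1) * cexp (-((t * y : ℝ) : ℂ)))
      (fun y : ℝ => (t : ℂ) ^ (1 - s) * (↑(-(t * y)).exp * ((t * y : ℝ) : ℂ) ^ (s - 1)))
      (Ioi 1) := by
    intro y hy
    dsimp only
    rw [Complex.ofReal_mul, Complex.mul_cpow_ofReal_nonneg ht.le (zero_le_one.trans hy.le),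
      Complex.ofReal_exp, Complex.ofReal_neg, ← Complex.ofReal_mul, ← mul_assoc, ← mul_assoc,
      mul_right_comm ((t : ℂ) ^ (1 - s)), ← Complex.cpow_add _ _ htc, sub_add_sub_cancel',
      sub_self, Complex.cpow_zero, one_mul, mul_comm]
  rw [setIntegral_congr_fun measurableSet_Ioi hpoint, integral_const_mul, hscale,
    upperIncompleteGamma, ← mul_assoc, show -s = 1 - s + -1 by ring,
    Complex.cpow_add _ _ htc, Complex.cpow_neg_one]

theorem norm_cpow_mul_exp_neg_mul_le {c : ℂ} (hc : c.re ≤ 0) {y : ℝ} (hy : 1 ≤ y) (t : ℝ) :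
    ‖(y : ℂ) ^ c * cexp (-((t * y : ℝ) : ℂ))‖ ≤ Real.exp (-(t * y)) := by
  rw [norm_mul, Complex.norm_cpow_eq_rpow_re_of_pos (zero_lt_one.trans_le hy),
    ← Complex.ofReal_neg, Complex.norm_exp_ofReal]
  exact mul_le_of_le_one_left (Real.exp_pos _).le (Real.rpow_le_one_of_one_le_of_nonpos hy hc)

theorem integrableOn_Ioi_one_cpow_mul_exp_neg_mul {c : ℂ} (hc : c.re ≤ 0) {t : ℝ} (ht : 0 < t) :
    IntegrableOn (fun y : ℝ => (y : ℂ) ^ c * cexp (-((t * y : ℝ) : ℂ))) (Ioi 1) := by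
  refine (exp_neg_integrableOn_Ioi 1 ht).mono' ?_ ?_
  · refine ContinuousOn.aestronglyMeasurable (fun y hy => ContinuousAt.continuousWithinAt ?_)
      measurableSet_Ioi
    exact (Complex.continuousAt_ofReal_cpow_const _ _ (Or.inr (zero_lt_one.trans hy).ne')).mul
      (by fun_prop)
  · filter_upwards [ae_restrict_mem measurableSet_Ioi] with y hy
    simpa only [neg_mul] using norm_cpow_mul_exp_neg_mul_le hc (le_of_lt hy) t

theorem tendsto_cpow_mul_exp_neg_mul_atTop {c : ℂ} (hc : c.re ≤ 0) {t : ℝ} (ht : 0 < t) :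
    Tendsto (fun y : ℝ => (y : ℂ) ^ c * cexp (-((t * y : ℝ) : ℂ))) atTop (𝓝 0) := by
  refine squeeze_zero_norm' ?_ (Real.tendsto_exp_atBot.comp
    (tendsto_neg_atTop_atBot.comp (tendsto_id.const_mul_atTop ht)))
  filter_upwards [eventually_ge_atTop 1] with y hy
  exact norm_cpow_mul_exp_neg_mul_le hc hy t

theorem integral_Ioi_one_mul_cpow_mul_exp_neg_mul {β : ℂ} (hβ : 0 ≤ β.re) {t : ℝ} (ht : 0 < t) :
    ∫ y in Ioi (1 : ℝ), β * (y : ℂ) ^ (-1 - β) * cexp (-((t * y : ℝ) : ℂ))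
      = cexp (-(t : ℂ))
        - t * ∫ y in Ioi (1 : ℝ), (y : ℂ) ^ (-β) * cexp (-((t * y : ℝ) : ℂ)) := by
  have hpow : ∀ x ∈ Ioi (1 : ℝ),
      HasDerivAt (fun y : ℝ => (y : ℂ) ^ (-β)) (-β * (x : ℂ) ^ (-1 - β)) x := fun x hx => by
    rw [show -1 - β = -β - 1 by ring]
    exact (Complex.hasStrictDerivAt_cpow_const
      (Complex.ofReal_mem_slitPlane.2 (zero_lt_one.trans hx))).hasDerivAt.comp_ofReal
  have hexp : ∀ x ∈ Ioi (1 : ℝ), HasDerivAt (fun y : ℝ => cexp (-((t * y : ℝ) : ℂ)))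
      (-t * cexp (-((t * x : ℝ) : ℂ))) x := fun x _ => by
    simpa [mul_comm] using (((hasDerivAt_id x).const_mul t).ofReal_comp.neg.cexp)
  have hdecay : (-β).re ≤ 0 := by simpa using hβ
  have hdecay' : (-1 - β).re ≤ 0 := by
    simp only [Complex.sub_re, Complex.neg_re, Complex.one_re]; linarith
  have huv' : IntegrableOn
      (fun y : ℝ => (y : ℂ) ^ (-β) * (-t * cexp (-((t * y : ℝ) : ℂ)))) (Ioi 1) :=
    IntegrableOn.congr_fun
      ((integrableOn_Ioi_one_cpow_mul_exp_neg_mul hdecay ht).const_mul (-t : ℂ))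
      (fun y _ => by ring) measurableSet_Ioi
  have hu'v : IntegrableOn
      (fun y : ℝ => -β * (y : ℂ) ^ (-1 - β) * cexp (-((t * y : ℝ) : ℂ))) (Ioi 1) :=
    IntegrableOn.congr_fun
      ((integrableOn_Ioi_one_cpow_mul_exp_neg_mul hdecay' ht).const_mul (-β))
      (fun y _ => by ring) measurableSet_Ioi
  have hbdry : Tendsto (fun y : ℝ => (y : ℂ) ^ (-β) * cexp (-((t * y : ℝ) : ℂ)))
      (𝓝[>] 1) (𝓝 (cexp (-(t : ℂ)))) := by
    have hcont : ContinuousAt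
        (fun y : ℝ => (y : ℂ) ^ (-β) * cexp (-((t * y : ℝ) : ℂ))) 1 :=
      (Complex.continuousAt_ofReal_cpow_const _ _ (Or.inr one_ne_zero)).mul (by fun_prop)
    simpa using hcont.tendsto.mono_left nhdsWithin_le_nhds
  have h := integral_Ioi_mul_deriv_eq_deriv_mul hpow hexp huv' hu'v hbdry
    (tendsto_cpow_mul_exp_neg_mul_atTop hdecay ht)
  have e1 : ∫ y in Ioi (1 : ℝ), (y : ℂ) ^ (-β) * (-t * cexp (-((t * y : ℝ) : ℂ)))
      = -t * ∫ y in Ioi (1 : ℝ), (y : ℂ) ^ (-β) * cexp (-((t * y : ℝ) : ℂ)) := by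
    rw [← integral_const_mul]; congr 1 with y; ring
  have e2 : ∫ y in Ioi (1 : ℝ), -β * (y : ℂ) ^ (-1 - β) * cexp (-((t * y : ℝ) : ℂ))
      = -∫ y in Ioi (1 : ℝ), β * (y : ℂ) ^ (-1 - β) * cexp (-((t * y : ℝ) : ℂ)) := by
    rw [← integral_neg]; congr 1 with y; ring
  rw [e1, e2] at h
  linear_combination -h

theorem tendsto_cpow_neg_mul_one_sub_exp_neg_nhdsGT_zero {β : ℂ} (hβ : β.re < 1) :
    Tendsto (fun t : ℝ => (t : ℂ) ^ (-β) * (1 - cexp (-(t : ℂ)))) (𝓝[>] 0) (𝓝 0) := by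
  have hpow : Tendsto (fun t : ℝ => 2 * t ^ (1 - β.re)) (𝓝[>] 0) (𝓝 0) := by
    have := ((Real.continuousAt_rpow_const 0 (1 - β.re) (Or.inr (by linarith))).tendsto.mono_left
      (nhdsWithin_le_nhds (s := Ioi 0))).const_mul 2
    rwa [Real.zero_rpow (by linarith), mul_zero] at this
  refine squeeze_zero_norm' ?_ hpow
  filter_upwards [Ioo_mem_nhdsGT one_pos] with t ⟨ht0, ht1⟩
  have hexp : ‖(1 : ℂ) - cexp (-(t : ℂ))‖ ≤ 2 * t := by
    rw [norm_sub_rev]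
    simpa [abs_of_pos ht0] using
      Complex.norm_exp_sub_one_le (x := -(t : ℂ)) (by simpa [abs_of_pos ht0] using ht1.le)
  calc ‖(t : ℂ) ^ (-β) * (1 - cexp (-(t : ℂ)))‖
      ≤ t ^ (-β.re) * (2 * t) := by
        rw [norm_mul, Complex.norm_cpow_eq_rpow_re_of_pos ht0, Complex.neg_re]
        gcongr
    _ = 2 * t ^ (1 - β.re) := by
        rw [sub_eq_neg_add, Real.rpow_add ht0, Real.rpow_one]; ring

theorem cpow_neg_mul_one_sub_integral_eq {β : ℂ} (hβ : 0 ≤ β.re) {t : ℝ} (ht : 0 < t) :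
    (t : ℂ) ^ (-β) *
        (1 - ∫ y in Ioi (1 : ℝ), β * (y : ℂ) ^ (-1 - β) * cexp (-((t * y : ℝ) : ℂ)))
      = (t : ℂ) ^ (-β) * (1 - cexp (-(t : ℂ))) + upperIncompleteGamma (1 - β) t := by
  have htc : (t : ℂ) ≠ 0 := Complex.ofReal_ne_zero.2 ht.ne'
  have hsub := integral_Ioi_one_cpow_mul_exp_neg_mul (1 - β) ht
  rw [sub_sub_cancel_left, neg_sub, Complex.cpow_sub _ _ htc, Complex.cpow_one] at hsub
  have htβ : (t : ℂ) ^ β ≠ 0 := by simp [htc]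
  rw [integral_Ioi_one_mul_cpow_mul_exp_neg_mul hβ ht, hsub, Complex.cpow_neg]
  field_simp
  ring

/-- For complex `β` with `0 < Re β < 1`,
`exp(-β log t) (1 - φ_β(t)) → Γ(1-β)` as `t → 0⁺`, where
`φ_β(t) = ∫_1^∞ β y^{-1-β} e^{-ty} dy`. -/
theorem stmt3 (β : ℂ) (h0 : 0 < β.re) (h1 : β.re < 1) :
    Filter.Tendsto
      (fun t : ℝ => Complex.exp (-β * (Real.log t : ℂ)) *
        (1 - ∫ y in Set.Ioi (1 : ℝ), β * (y : ℂ) ^ (-1 - β) * Complex.exp (-((t * y : ℝ) : ℂ))))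
      (nhdsWithin 0 (Set.Ioi 0)) (nhds (Complex.Gamma (1 - β))) := by
  have hlim := (tendsto_cpow_neg_mul_one_sub_exp_neg_nhdsGT_zero h1).add
    (tendsto_upperIncompleteGamma_nhdsGT_zero (s := 1 - β) (by simpa using h1))
  rw [zero_add] at hlim
  refine hlim.congr' ?_
  filter_upwards [self_mem_nhdsWithin] with t (ht : 0 < t)
  rw [← cpow_neg_mul_one_sub_integral_eq h0.le ht, Complex.cpow_def_of_ne_zero
    (Complex.ofReal_ne_zero.2 ht.ne'), ← Complex.ofReal_log ht.le, mul_comm (-β)]
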